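/- arXiv:1312.3480 — 5 statements merged into one kernel-verified Lean document; each statement's English description precedes it below -/
import Mathlib

section
/- Let α : F → R_n(G) be the group homomorphism determined by α(f_i) = (g_i, t_i) for i = 1,…,m. Then the kernel of α is exactly R'·R^n, where R' = [R,R] is the commutator subgroup of R and R^n is the subgroup generated by all n-th powers of elements of R (with R^0 = {1}). In particular, α induces a faithful representation of F/(R'R^n) as a subgroup of R_n(G). -/
/-- The group `R_n(G)` of pairs `(g,t)` with `g ∈ G` and `t` in the free left
`ℤ_n[G]`-module with basis indexed by `ι`, with multiplication
`(g,t)(h,s) = (gh, g·s+t)` (the semidirect product `T_n ⋊ G`).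
Here `ℤ_n = ZMod n`, so `ℤ_0 = ℤ`. -/
@[ext]
structure MagnusGroup (n : ℕ) (G : Type*) [Group G] (ι : Type*) where
  fst : G
  snd : ι → MonoidAlgebra (ZMod n) G

namespace MagnusGroup

variable {n : ℕ} {G : Type*} [Group G] {ι : Type*}

noncomputable instance : Mul (MagnusGroup n G ι) :=
  ⟨fun a b => ⟨a.fst * b.fst, fun i => MonoidAlgebra.of (ZMod n) G a.fst * b.snd i + a.snd i⟩⟩

noncomputable instance : One (MagnusGroup n G ι) := ⟨⟨1, 0⟩⟩

noncomputable instance : Inv (MagnusGroup n G ι) :=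
  ⟨fun a => ⟨a.fst⁻¹, fun i => -(MonoidAlgebra.of (ZMod n) G a.fst⁻¹ * a.snd i)⟩⟩

@[simp] lemma mul_fst (a b : MagnusGroup n G ι) : (a * b).fst = a.fst * b.fst := rfl
@[simp] lemma mul_snd (a b : MagnusGroup n G ι) (i : ι) :
    (a * b).snd i = MonoidAlgebra.of (ZMod n) G a.fst * b.snd i + a.snd i := rfl
@[simp] lemma one_fst : (1 : MagnusGroup n G ι).fst = 1 := rfl
@[simp] lemma one_snd (i : ι) : (1 : MagnusGroup n G ι).snd i = 0 := rfl
@[simp] lemma inv_fst (a : MagnusGroup n G ι) : (a⁻¹).fst = a.fst⁻¹ := rfl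
@[simp] lemma inv_snd (a : MagnusGroup n G ι) (i : ι) :
    (a⁻¹).snd i = -(MonoidAlgebra.of (ZMod n) G a.fst⁻¹ * a.snd i) := rfl

noncomputable instance : Group (MagnusGroup n G ι) where
  mul_assoc a b c :=
    MagnusGroup.ext (mul_assoc _ _ _)
      (funext fun i => by simp only [mul_fst, mul_snd, map_mul, mul_add, mul_assoc, add_assoc])
  one_mul a :=
    MagnusGroup.ext (one_mul _)
      (funext fun i => by simp only [mul_fst, mul_snd, one_fst, one_snd, map_one, one_mul,
        add_zero, zero_add])
  mul_one a :=
    MagnusGroup.ext (mul_one _)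
      (funext fun i => by simp only [mul_fst, mul_snd, one_fst, one_snd, mul_zero, zero_add])
  inv_mul_cancel a :=
    MagnusGroup.ext (inv_mul_cancel _)
      (funext fun i => by simp only [mul_fst, mul_snd, inv_fst, inv_snd, one_snd,
        add_neg_cancel, neg_add_cancel])

end MagnusGroup

/-- The subgroup generated by all `n`-th powers of elements of `H`
(for `n = 0` this is the trivial subgroup, matching `R⁰ = 1`). -/
def Subgroup.nthPowers {G : Type*} [Group G] (H : Subgroup G) (n : ℕ) : Subgroup G :=
  Subgroup.closure {x | ∃ h ∈ H, h ^ n = x}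

/-- The Magnus–Romanovskii homomorphism `α : F → R_n(G)`, `G = F/R`, sending the `i`-th
free generator `f_i` to `(g_i, t_i)`. -/
noncomputable def magnusHom (m n : ℕ) (R : Subgroup (FreeGroup (Fin m))) [R.Normal] :
    FreeGroup (Fin m) →* MagnusGroup n (FreeGroup (Fin m) ⧸ R) (Fin m) :=
  FreeGroup.lift fun i =>
    (⟨(QuotientGroup.mk (FreeGroup.of i) : FreeGroup (Fin m) ⧸ R), Pi.single i 1⟩ :
      MagnusGroup n (FreeGroup (Fin m) ⧸ R) (Fin m))

/-!
Elements of `R` are sent to pairs `(1, t)`; these commute and have order dividing `n`, so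
`R'Rⁿ ≤ ker α`. Conversely, let `A = R/R'Rⁿ`, a `ℤ_n`-module, and `σ = Quotient.out` a
transversal of `R`. The classes `ψ_g(w) ∈ A` of the Schreier elements `σ(g) w σ(g w̄)⁻¹`
satisfy `ψ_g(uv) = ψ_g(u) + ψ_{gū}(v)`, the same rule as the second coordinate of `α`.
Hence the `ℤ_n`-linear map `T_n → A` with `g·tᵢ ↦ ψ_g(fᵢ)` sends `g·(α w).snd` to `ψ_g(w)`.
If `α w = 1` this gives `ψ_1(w) = 0`, i.e. `σ(1) w σ(1)⁻¹ ∈ R'Rⁿ`, so `w ∈ R'Rⁿ`.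
-/

open Subgroup MonoidAlgebra
open scoped commutatorElement

namespace MagnusGroup

variable {n : ℕ} {G : Type*} [Group G] {ι : Type*}

@[simps]
def fstHom : MagnusGroup n G ι →* G where
  toFun := fst
  map_one' := rfl
  map_mul' _ _ := rfl

lemma snd_one : (1 : MagnusGroup n G ι).snd = 0 := rfl

lemma snd_mul (a b : MagnusGroup n G ι) :
    (a * b).snd = of (ZMod n) G a.fst • b.snd + a.snd := rfl

lemma snd_inv (a : MagnusGroup n G ι) : a⁻¹.snd = -(of (ZMod n) G a.fst⁻¹ • a.snd) := rfl

lemma commute_of_fst_eq_one {a b : MagnusGroup n G ι} (ha : a.fst = 1) (hb : b.fst = 1) :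
    Commute a b := by
  ext i
  · simp [ha, hb]
  · simp [ha, hb, add_comm]

lemma pow_of_fst_eq_one {a : MagnusGroup n G ι} (ha : a.fst = 1) (k : ℕ) :
    a ^ k = ⟨1, k • a.snd⟩ := by
  induction k with
  | zero => rw [pow_zero, zero_smul]; rfl
  | succ k ih =>
    refine MagnusGroup.ext (by simp [pow_succ, ih, ha]) (funext fun i => ?_)
    rw [pow_succ, ih, mul_snd, map_one, one_mul]
    show a.snd i + (k • a.snd) i = ((k + 1) • a.snd) i
    rw [succ_nsmul, Pi.add_apply, add_comm]

lemma pow_eq_one_of_fst_eq_one {a : MagnusGroup n G ι} (ha : a.fst = 1) : a ^ n = 1 := by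
  rw [pow_of_fst_eq_one ha, ← Nat.cast_smul_eq_nsmul (ZMod n), ZMod.natCast_self, zero_smul]
  rfl

end MagnusGroup

namespace Subgroup

variable {F : Type*} [Group F] (R : Subgroup F) [R.Normal] (n : ℕ)

instance nthPowers_normal : (R.nthPowers n).Normal := by
  refine ⟨fun x hx g => ?_⟩
  have hmap : (R.nthPowers n).map (MulAut.conj g).toMonoidHom ≤ R.nthPowers n := by
    rw [nthPowers, MonoidHom.map_closure, closure_le]
    rintro _ ⟨_, ⟨h, hh, rfl⟩, rfl⟩
    exact subset_closure ⟨g * h * g⁻¹, ‹R.Normal›.conj_mem h hh g, by simp [conj_pow]⟩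
  simpa using hmap (mem_map_of_mem _ hx)

end Subgroup

section RelationModule

variable {F : Type*} [Group F] (R : Subgroup F) [R.Normal] (n : ℕ)

instance : CommGroup (R ⧸ (⁅R, R⁆ ⊔ R.nthPowers n).subgroupOf R) where
  mul_comm a b := by
    induction a using QuotientGroup.induction_on with | H r => ?_
    induction b using QuotientGroup.induction_on with | H s => ?_
    rw [← QuotientGroup.mk_mul, ← QuotientGroup.mk_mul, QuotientGroup.eq, mem_subgroupOf]
    have hcomm : (((r * s)⁻¹ * (s * r) : R) : F) = ⁅(s : F)⁻¹, (r : F)⁻¹⁆ := by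
      simp only [coe_mul, coe_inv, commutatorElement_def, inv_inv]
      group
    rw [hcomm]
    exact mem_sup_left (commutator_mem_commutator (inv_mem s.2) (inv_mem r.2))

abbrev RelationModule : Type _ := Additive (R ⧸ (⁅R, R⁆ ⊔ R.nthPowers n).subgroupOf R)

namespace RelationModule

variable {R n}

def mk (w : F) (hw : w ∈ R) : RelationModule R n := Additive.ofMul (QuotientGroup.mk ⟨w, hw⟩)

lemma mk_mul {u v : F} (hu : u ∈ R) (hv : v ∈ R) :
    mk (u * v) (mul_mem hu hv) = (mk u hu : RelationModule R n) + mk v hv := rfl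

lemma mk_pow {w : F} (hw : w ∈ R) (k : ℕ) :
    mk (w ^ k) (pow_mem hw k) = k • (mk w hw : RelationModule R n) := by
  simp only [mk, ← ofMul_pow, ← QuotientGroup.mk_pow]
  rfl

lemma mk_eq_zero_iff {w : F} (hw : w ∈ R) :
    (mk w hw : RelationModule R n) = 0 ↔ w ∈ ⁅R, R⁆ ⊔ R.nthPowers n := by
  rw [mk, ofMul_eq_zero, QuotientGroup.eq_one_iff, mem_subgroupOf]

lemma nsmul_eq_zero (a : RelationModule R n) : n • a = 0 := by
  obtain ⟨r, rfl⟩ := QuotientGroup.mk_surjective (s := (⁅R, R⁆ ⊔ R.nthPowers n).subgroupOf R) a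
  change n • mk (r : F) r.2 = 0
  rw [← mk_pow, mk_eq_zero_iff]
  exact mem_sup_right (subset_closure ⟨r, r.2, rfl⟩)

noncomputable instance : Module (ZMod n) (RelationModule R n) :=
  AddCommGroup.zmodModule nsmul_eq_zero

end RelationModule

open RelationModule

noncomputable def schreierClass (g : F ⧸ R) (w : F) : RelationModule R n :=
  mk (g.out * w * (g * w).out⁻¹) (by rw [← QuotientGroup.eq_one_iff]; simp)

variable {R n}

lemma schreierClass_mul (g : F ⧸ R) (u v : F) :
    schreierClass R n g (u * v) = schreierClass R n g u + schreierClass R n (g * u) v := by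
  simp only [schreierClass, ← RelationModule.mk_mul]
  congr 1
  simp only [QuotientGroup.mk_mul, mul_assoc]
  group

lemma schreierClass_one (g : F ⧸ R) : schreierClass R n g 1 = 0 := by
  have h := schreierClass_mul (n := n) g 1 1
  rw [one_mul, QuotientGroup.mk_one, mul_one, left_eq_add] at h
  exact h

lemma schreierClass_inv (g : F ⧸ R) (w : F) :
    schreierClass R n g w⁻¹ = -schreierClass R n (g * (w : F ⧸ R)⁻¹) w := by
  have h := schreierClass_mul (n := n) (g * (w : F ⧸ R)⁻¹) w w⁻¹
  rw [mul_inv_cancel, schreierClass_one, inv_mul_cancel_right] at h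
  exact eq_neg_of_add_eq_zero_right h.symm

lemma mem_of_schreierClass_one_eq_zero {w : F} (hw : w ∈ R) (h : schreierClass R n 1 w = 0) :
    w ∈ ⁅R, R⁆ ⊔ R.nthPowers n := by
  rw [schreierClass, mk_eq_zero_iff, one_mul, (QuotientGroup.eq_one_iff w).2 hw,
    mul_assoc, Normal.mem_comm_iff inferInstance, inv_mul_cancel_right] at h
  exact h

variable (R n) {ι : Type*} [Fintype ι]

noncomputable def schreierMap (x : ι → F) :
    (ι → MonoidAlgebra (ZMod n) (F ⧸ R)) →ₗ[ZMod n] RelationModule R n :=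
  (Pi.basis fun _ => MonoidAlgebra.basis (F ⧸ R) (ZMod n)).constr (ZMod n)
    fun p => schreierClass R n p.2 (x p.1)

lemma schreierMap_single [DecidableEq ι] (x : ι → F) (i : ι) (g : F ⧸ R) :
    schreierMap R n x (Pi.single i (of (ZMod n) _ g)) = schreierClass R n g (x i) := by
  have h := (Pi.basis fun _ => MonoidAlgebra.basis (F ⧸ R) (ZMod n)).constr_basis (ZMod n)
    (fun p : (_ : ι) × (F ⧸ R) => schreierClass R n p.2 (x p.1)) ⟨i, g⟩
  rwa [Pi.basis_apply, MonoidAlgebra.basis_apply, ← of_apply] at h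

end RelationModule

section magnusHom

variable (m n : ℕ) (R : Subgroup (FreeGroup (Fin m))) [R.Normal]

lemma magnusHom_of (i : Fin m) :
    magnusHom m n R (FreeGroup.of i) =
      ⟨(FreeGroup.of i : FreeGroup (Fin m) ⧸ R), Pi.single i 1⟩ :=
  FreeGroup.lift_apply_of

lemma fst_magnusHom (w : FreeGroup (Fin m)) : (magnusHom m n R w).fst = w :=
  DFunLike.congr_fun (FreeGroup.ext_hom (MagnusGroup.fstHom.comp (magnusHom m n R))
    (QuotientGroup.mk' R) fun i => by simp [magnusHom_of]) w

variable {m n R} in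
lemma fst_magnusHom_eq_one_iff {w : FreeGroup (Fin m)} :
    (magnusHom m n R w).fst = 1 ↔ w ∈ R := by
  rw [fst_magnusHom, QuotientGroup.eq_one_iff]

lemma schreierMap_smul_snd_magnusHom (w : FreeGroup (Fin m)) (g : FreeGroup (Fin m) ⧸ R) :
    schreierMap R n FreeGroup.of (of (ZMod n) _ g • (magnusHom m n R w).snd) =
      schreierClass R n g w := by
  induction w generalizing g with
  | C1 =>
    rw [map_one, MagnusGroup.snd_one, smul_zero, map_zero, schreierClass_one]
  | of i =>
    rw [magnusHom_of, ← Pi.single_smul, smul_eq_mul, mul_one, schreierMap_single]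
  | inv_of i ih =>
    rw [map_inv, MagnusGroup.snd_inv, smul_neg, smul_smul, ← map_mul, map_neg, ih,
      fst_magnusHom, schreierClass_inv]
  | mul u v ihu ihv =>
    rw [map_mul, MagnusGroup.snd_mul, smul_add, smul_smul, ← map_mul, map_add, ihu, ihv,
      fst_magnusHom, schreierClass_mul, add_comm]

end magnusHom

/-- Romanovskii: the kernel of `α : F → R_n(G)` is exactly `R'·Rⁿ`; in particular `α`
induces a faithful representation of `F/(R'Rⁿ)` in `R_n(G)`. -/
theorem magnusHom_ker (m n : ℕ) (R : Subgroup (FreeGroup (Fin m))) [R.Normal] :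
    (magnusHom m n R).ker = ⁅R, R⁆ ⊔ R.nthPowers n := by
  refine le_antisymm (fun w hw => ?_) (sup_le ?_ ?_)
  · rw [MonoidHom.mem_ker] at hw
    have hwR : w ∈ R := fst_magnusHom_eq_one_iff.1 (by rw [hw]; rfl)
    refine mem_of_schreierClass_one_eq_zero hwR ?_
    rw [← schreierMap_smul_snd_magnusHom, hw, MagnusGroup.snd_one, smul_zero, map_zero]
  · rw [commutator_le]
    intro r hr s hs
    rw [MonoidHom.mem_ker, map_commutatorElement, commutatorElement_eq_one_iff_commute]
    exact MagnusGroup.commute_of_fst_eq_one (fst_magnusHom_eq_one_iff.2 hr)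
      (fst_magnusHom_eq_one_iff.2 hs)
  · rw [nthPowers, closure_le]
    rintro _ ⟨r, hr, rfl⟩
    rw [SetLike.mem_coe, MonoidHom.mem_ker, map_pow]
    exact MagnusGroup.pow_eq_one_of_fst_eq_one (fst_magnusHom_eq_one_iff.2 hr)
end

section
/- For every m ≥ 2, r ≥ 1 and n ≥ 1, one has the equality of subgroups [F,F]·K_{r,n} = [F,F]·F^{n^r} in F, where F^{n^r} denotes the subgroup generated by all (n^r)-th powers of elements of F. Consequently, the abelianization Φ_{m,r,n}/[Φ_{m,r,n}, Φ_{m,r,n}] is isomorphic to (ℤ/n^rℤ)^m. -/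
/-- The subgroups `K_{r,n}`: `K_{0,n} = F` and `K_{r+1,n} = [K_{r,n},K_{r,n}]·(K_{r,n})^n`. -/
def Ksub (G : Type*) [Group G] (n : ℕ) : ℕ → Subgroup G
  | 0 => ⊤
  | r + 1 => ⁅Ksub G n r, Ksub G n r⁆ ⊔ (Ksub G n r).nthPowers n

lemma map_nthPowers {G G' : Type*} [Group G] [Group G'] (f : G →* G') (H : Subgroup G) (n : ℕ) :
    (H.nthPowers n).map f = (H.map f).nthPowers n := by
  unfold Subgroup.nthPowers
  rw [MonoidHom.map_closure]
  congr 1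
  ext x
  constructor
  · rintro ⟨y, ⟨h, hh, rfl⟩, rfl⟩
    exact ⟨f h, ⟨h, hh, rfl⟩, (map_pow f h n).symm⟩
  · rintro ⟨h', ⟨h, hh, rfl⟩, rfl⟩
    exact ⟨h ^ n, ⟨h, hh, rfl⟩, map_pow f h n⟩

lemma Ksub_map (G : Type*) [Group G] (n r : ℕ) (φ : G ≃* G) :
    (Ksub G n r).map φ.toMonoidHom = Ksub G n r := by
  induction r with
  | zero => simpa [Ksub] using Subgroup.map_top_of_surjective _ φ.surjective
  | succ r ih =>
    show (⁅Ksub G n r, Ksub G n r⁆ ⊔ (Ksub G n r).nthPowers n).map φ.toMonoidHom = _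
    rw [Subgroup.map_sup, Subgroup.map_commutator, map_nthPowers, ih]
    rfl

instance Ksub_characteristic (G : Type*) [Group G] (n r : ℕ) : (Ksub G n r).Characteristic :=
  Subgroup.characteristic_iff_map_eq.mpr fun φ => Ksub_map G n r φ


lemma derivedSeries_le_Ksub (G : Type*) [Group G] (n r : ℕ) :
    derivedSeries G r ≤ Ksub G n r := by
  induction r with
  | zero => simp [Ksub]
  | succ r ih =>
    calc derivedSeries G (r + 1) = ⁅derivedSeries G r, derivedSeries G r⁆ := rfl
    _ ≤ ⁅Ksub G n r, Ksub G n r⁆ := Subgroup.commutator_mono ih ih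
    _ ≤ _ := le_sup_left

/-!
In an abelian group `A` the commutators in the recursion for `K_{r,n}` vanish and
`(A^a)^b = A^{ab}`, so `K_{r,n}(A) = A^{n^r}`. Since `K_{r,n}` commutes with images under
surjections, `K_{r,n}(F)` and `F^{n^r}` have the same image in the abelianization of `F`, and the
two sides of the equality are the preimages of that image. The abelianization of `F/K_{r,n}` is
therefore `F/([F,F]·F^{n^r})`, the free abelian group of exponent `n^r` on `m` generators; it is
identified with `(ℤ/n^r)^m` by the two evident homomorphisms, which are mutually inverse on
generators.
-/

namespace Subgroup

variable {G : Type*} [Group G]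

theorem nthPowers_le_iff {H K : Subgroup G} {n : ℕ} :
    H.nthPowers n ≤ K ↔ ∀ h ∈ H, h ^ n ∈ K := by
  simp [nthPowers, closure_le, Set.subset_def]

theorem nthPowers_eq_map_powMonoidHom {A : Type*} [CommGroup A] (H : Subgroup A) (n : ℕ) :
    H.nthPowers n = H.map (powMonoidHom n) := by
  rw [nthPowers, ← (H.map (powMonoidHom n)).closure_eq]
  rfl

instance nthPowers_top_characteristic (n : ℕ) : ((⊤ : Subgroup G).nthPowers n).Characteristic :=
  characteristic_iff_map_eq.mpr fun φ => by rw [map_nthPowers, map_top_of_surjective _ φ.surjective]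

end Subgroup

theorem Ksub_eq_nthPowers_top (A : Type*) [CommGroup A] (n r : ℕ) :
    Ksub A n r = (⊤ : Subgroup A).nthPowers (n ^ r) := by
  induction r with
  | zero => ext; simp [Ksub, Subgroup.nthPowers_eq_map_powMonoidHom]
  | succ r ih =>
    have hpow : (powMonoidHom n).comp (powMonoidHom (n ^ r)) =
        (powMonoidHom (n ^ (r + 1)) : A →* A) := by
      ext a; simp [← pow_mul, pow_succ]
    rw [Ksub, ih, (Subgroup.commutator_eq_bot_iff_le_centralizer).2 (fun a _ b _ => mul_comm b a),
      bot_sup_eq, Subgroup.nthPowers_eq_map_powMonoidHom, Subgroup.nthPowers_eq_map_powMonoidHom,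
      Subgroup.nthPowers_eq_map_powMonoidHom, Subgroup.map_map, hpow]

theorem map_Ksub_of_surjective {G H : Type*} [Group G] [Group H] {f : G →* H}
    (hf : Function.Surjective f) (n r : ℕ) : (Ksub G n r).map f = Ksub H n r := by
  induction r with
  | zero => exact Subgroup.map_top_of_surjective f hf
  | succ r ih => rw [Ksub, Ksub, Subgroup.map_sup, Subgroup.map_commutator, map_nthPowers, ih]

theorem map_Ksub_abelianization_of (G : Type*) [Group G] (n r : ℕ) :
    (Ksub G n r).map Abelianization.of =
      ((⊤ : Subgroup G).nthPowers (n ^ r)).map Abelianization.of := by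
  have hsurj : Function.Surjective (Abelianization.of (G := G)) := QuotientGroup.mk_surjective
  rw [map_Ksub_of_surjective hsurj, Ksub_eq_nthPowers_top, map_nthPowers,
    Subgroup.map_top_of_surjective _ hsurj]

theorem commutator_sup_Ksub (G : Type*) [Group G] (n r : ℕ) :
    commutator G ⊔ Ksub G n r = commutator G ⊔ (⊤ : Subgroup G).nthPowers (n ^ r) := by
  have h := congrArg (Subgroup.comap Abelianization.of) (map_Ksub_abelianization_of G n r)
  rwa [Subgroup.comap_map_eq, Subgroup.comap_map_eq, Abelianization.ker_of, sup_comm,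
    sup_comm ((⊤ : Subgroup G).nthPowers _)] at h

def abelianizationQuotientEquiv (G : Type*) [Group G] (N : Subgroup G) [N.Normal] :
    Abelianization (G ⧸ N) ≃* G ⧸ (commutator G ⊔ N) :=
  have h : commutator (G ⧸ N) = (commutator G ⊔ N).map (QuotientGroup.mk' N) := by
    rw [Subgroup.map_sup, (Subgroup.map_eq_bot_iff _).2 (QuotientGroup.ker_mk' N).ge, sup_bot_eq,
      commutator_def, commutator_def, Subgroup.map_commutator,
      Subgroup.map_top_of_surjective _ (QuotientGroup.mk'_surjective N)]
  (QuotientGroup.quotientMulEquivOfEq h).trans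
    (QuotientGroup.quotientQuotientEquivQuotient N _ le_sup_right)

theorem QuotientGroup.commute_of_commutator_le {G : Type*} [Group G] {N : Subgroup G} [N.Normal]
    (h : commutator G ≤ N) (a b : G ⧸ N) : Commute a b := by
  induction a using QuotientGroup.induction_on with | H a =>
  induction b using QuotientGroup.induction_on with | H b =>
  exact (Commute.all (Abelianization.of a) (Abelianization.of b)).map
    (QuotientGroup.map _ N (MonoidHom.id G) h)

section ZModHom

variable {G : Type*} [Group G] {N : ℕ}

def zmodPowersHom (g : G) (hg : g ^ N = 1) : Multiplicative (ZMod N) →* G :=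
  AddMonoidHom.toMultiplicativeLeft <|
    ZMod.lift N ⟨zmultiplesHom (Additive G) (Additive.ofMul g), by simp [← ofMul_pow, hg]⟩

@[simp]
theorem zmodPowersHom_ofAdd_one (g : G) (hg : g ^ N = 1) :
    zmodPowersHom g hg (Multiplicative.ofAdd 1) = g := by
  simp only [zmodPowersHom, AddMonoidHom.coe_toMultiplicativeLeft, Function.comp_apply,
    toAdd_ofAdd, ← Int.cast_one (R := ZMod N), ZMod.lift_coe]
  simp

theorem MonoidHom.ext_multiplicative_zmod {f f' : Multiplicative (ZMod N) →* G}
    (h : f (Multiplicative.ofAdd 1) = f' (Multiplicative.ofAdd 1)) : f = f' := by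
  refine MonoidHom.ext fun x => ?_
  obtain ⟨k, hk⟩ := ZMod.intCast_surjective (Multiplicative.toAdd x)
  have hx : x = Multiplicative.ofAdd (1 : ZMod N) ^ k := by
    rw [← ofAdd_zsmul, zsmul_one, hk, ofAdd_toAdd]
  rw [hx, map_zpow, map_zpow, h]

end ZModHom

theorem commutator_sup_nthPowers_le_ker {G A : Type*} [Group G] [CommGroup A] {N : ℕ}
    (hA : ∀ a : A, a ^ N = 1) (f : G →* A) :
    commutator G ⊔ (⊤ : Subgroup G).nthPowers N ≤ f.ker :=
  sup_le (Abelianization.commutator_subset_ker f)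
    (Subgroup.nthPowers_le_iff.2 fun g _ => by rw [MonoidHom.mem_ker, map_pow, hA])

theorem zmodPi_pow_eq_one {ι : Type*} {N : ℕ} (t : ι → Multiplicative (ZMod N)) : t ^ N = 1 := by
  funext i
  rw [Pi.pow_apply, ← ofAdd_toAdd (t i), ← ofAdd_nsmul, nsmul_eq_mul, ZMod.natCast_self, zero_mul]
  rfl

section FreeAbelianOfExponent

variable (ι : Type*) [DecidableEq ι] (N : ℕ)

def freeGroupQuotientToZModPi :
    FreeGroup ι ⧸ (commutator (FreeGroup ι) ⊔ (⊤ : Subgroup (FreeGroup ι)).nthPowers N) →*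
      (ι → Multiplicative (ZMod N)) :=
  QuotientGroup.lift _ (FreeGroup.lift fun i => Pi.mulSingle i (.ofAdd 1))
    (commutator_sup_nthPowers_le_ker zmodPi_pow_eq_one _)

theorem freeGroupQuotientToZModPi_of (i : ι) :
    freeGroupQuotientToZModPi ι N (FreeGroup.of i) = Pi.mulSingle i (.ofAdd 1) :=
  FreeGroup.lift_apply_of

variable [Fintype ι]

def zmodPiToFreeGroupQuotient :
    (ι → Multiplicative (ZMod N)) →*
      FreeGroup ι ⧸ (commutator (FreeGroup ι) ⊔ (⊤ : Subgroup (FreeGroup ι)).nthPowers N) :=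
  MonoidHom.noncommPiCoprod
    (fun i => zmodPowersHom (FreeGroup.of i : FreeGroup ι ⧸ _) <| by
      rw [← QuotientGroup.mk_pow, QuotientGroup.eq_one_iff]
      exact Subgroup.mem_sup_right (Subgroup.subset_closure ⟨_, trivial, rfl⟩))
    fun _ _ _ _ _ => QuotientGroup.commute_of_commutator_le le_sup_left _ _

theorem zmodPiToFreeGroupQuotient_mulSingle (i : ι) :
    zmodPiToFreeGroupQuotient ι N (Pi.mulSingle i (.ofAdd 1)) = FreeGroup.of i :=
  (MonoidHom.noncommPiCoprod_mulSingle _ _ _).trans (zmodPowersHom_ofAdd_one _ _)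

def freeGroupQuotientEquivZModPi :
    FreeGroup ι ⧸ (commutator (FreeGroup ι) ⊔ (⊤ : Subgroup (FreeGroup ι)).nthPowers N) ≃*
      (ι → Multiplicative (ZMod N)) :=
  MonoidHom.toMulEquiv (freeGroupQuotientToZModPi ι N) (zmodPiToFreeGroupQuotient ι N)
    (QuotientGroup.monoidHom_ext _ <| FreeGroup.ext_hom _ _ fun i => by
      simp [freeGroupQuotientToZModPi_of, zmodPiToFreeGroupQuotient_mulSingle])
    (MonoidHom.functions_ext' _ _ _ fun i => MonoidHom.ext_multiplicative_zmod <| by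
      simp [freeGroupQuotientToZModPi_of, zmodPiToFreeGroupQuotient_mulSingle])

end FreeAbelianOfExponent

theorem abelianization_free_solvable_quotient_general (m r n : ℕ) :
    commutator (FreeGroup (Fin m)) ⊔ Ksub (FreeGroup (Fin m)) n r =
      commutator (FreeGroup (Fin m)) ⊔ (⊤ : Subgroup (FreeGroup (Fin m))).nthPowers (n ^ r) ∧
    Nonempty (Abelianization (FreeGroup (Fin m) ⧸ Ksub (FreeGroup (Fin m)) n r) ≃*
      (Fin m → Multiplicative (ZMod (n ^ r)))) :=
  ⟨commutator_sup_Ksub _ n r,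
    ⟨(abelianizationQuotientEquiv _ _).trans <|
      (QuotientGroup.quotientMulEquivOfEq (commutator_sup_Ksub _ n r)).trans
        (freeGroupQuotientEquivZModPi (Fin m) (n ^ r))⟩⟩

/-- `[F,F]·K_{r,n} = [F,F]·F^{nʳ}`; consequently the abelianization of
`Φ_{m,r,n} = F/K_{r,n}` is isomorphic to `(ℤ/nʳℤ)^m`. -/
theorem abelianization_free_solvable_quotient (m r n : ℕ) (hm : 2 ≤ m) (hr : 1 ≤ r)
    (hn : 1 ≤ n) :
    commutator (FreeGroup (Fin m)) ⊔ Ksub (FreeGroup (Fin m)) n r =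
      commutator (FreeGroup (Fin m)) ⊔ (⊤ : Subgroup (FreeGroup (Fin m))).nthPowers (n ^ r) ∧
    Nonempty (Abelianization (FreeGroup (Fin m) ⧸ Ksub (FreeGroup (Fin m)) n r) ≃*
      (Fin m → Multiplicative (ZMod (n ^ r)))) :=
  abelianization_free_solvable_quotient_general m r n
end

section
/- For every l ≥ 1 and n ≥ 1, if R is a normal subgroup of the free group F = F_m containing all n-th powers of elements of F, then R·F^{(l)} ⊇ K_{l,n}. In particular, if R also contains F^{(r)}, then K_{r,n} ≤ R. -/
lemma Ksub_le_sup_aux {G : Type*} [Group G] (n : ℕ)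
    (R : Subgroup G) (hR : R.Normal)
    (hpow : ∀ f : G, f ^ n ∈ R) (r : ℕ) :
    Ksub G n r ≤ R ⊔ derivedSeries G r := by
  induction r with
  | zero => simp [Ksub]
  | succ r ih =>
    have hnth : (Ksub G n r).nthPowers n ≤ R := by
      apply Subgroup.closure_le _ |>.mpr
      rintro x ⟨h, _, rfl⟩
      exact hpow h
    have hker : (QuotientGroup.mk' R).ker = R := QuotientGroup.ker_mk' R
    set π := QuotientGroup.mk' R
    have hmapR : R.map π = ⊥ := by
      exact (Subgroup.map_eq_bot_iff _).mpr (le_of_eq hker.symm)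
    have hcomm : ⁅Ksub G n r, Ksub G n r⁆ ≤ R ⊔ derivedSeries G (r + 1) := by
      have hmap : (⁅Ksub G n r, Ksub G n r⁆ : Subgroup G).map π ≤
          (R ⊔ derivedSeries G (r + 1)).map π := by
        rw [Subgroup.map_commutator]
        calc ⁅(Ksub G n r).map π, (Ksub G n r).map π⁆
            ≤ ⁅(R ⊔ derivedSeries G r).map π, (R ⊔ derivedSeries G r).map π⁆ :=
              Subgroup.commutator_mono (Subgroup.map_mono ih) (Subgroup.map_mono ih)
          _ = ⁅(derivedSeries G r).map π, (derivedSeries G r).map π⁆ := by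
              rw [Subgroup.map_sup, hmapR, bot_sup_eq]
          _ = (derivedSeries G (r + 1)).map π := (Subgroup.map_commutator _ _ _).symm
          _ ≤ (R ⊔ derivedSeries G (r + 1)).map π := Subgroup.map_mono le_sup_right
      calc ⁅Ksub G n r, Ksub G n r⁆
          ≤ Subgroup.comap π ((⁅Ksub G n r, Ksub G n r⁆ : Subgroup G).map π) :=
            Subgroup.le_comap_map _ _
        _ ≤ Subgroup.comap π ((R ⊔ derivedSeries G (r + 1)).map π) :=
            Subgroup.comap_mono hmap
        _ = R ⊔ derivedSeries G (r + 1) :=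
            Subgroup.comap_map_eq_self (by rw [hker]; exact le_sup_left)
    exact sup_le hcomm (hnth.trans le_sup_left)

/-- If `R` is a normal subgroup of `F = F_m` containing all `n`-th powers, then
`R·F⁽ˡ⁾ ⊇ K_{l,n}` for every `l ≥ 1`; in particular if moreover `F⁽ʳ⁾ ≤ R` then
`K_{r,n} ≤ R`. -/
theorem Ksub_le_sup_derivedSeries (m l r n : ℕ) (hl : 1 ≤ l) (hn : 1 ≤ n)
    (R : Subgroup (FreeGroup (Fin m))) (hR : R.Normal)
    (hpow : ∀ f : FreeGroup (Fin m), f ^ n ∈ R) :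
    Ksub (FreeGroup (Fin m)) n l ≤ R ⊔ derivedSeries (FreeGroup (Fin m)) l ∧
    (derivedSeries (FreeGroup (Fin m)) r ≤ R → Ksub (FreeGroup (Fin m)) n r ≤ R) := by
  refine ⟨Ksub_le_sup_aux n R hR hpow l, fun hDr => ?_⟩
  have := Ksub_le_sup_aux n R hR hpow r
  exact this.trans (sup_le le_rfl hDr)
end

section
/- For every m ≥ 2, r ≥ 0 and n ≥ 1, the image of each free generator f_i in Φ_{m,r,n} = F/K_{r,n} has order exactly n^r. -/
lemma nthPowers_mono {G : Type*} [Group G] {H K : Subgroup G} (h : H ≤ K) (n : ℕ) :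
    H.nthPowers n ≤ K.nthPowers n :=
  Subgroup.closure_mono (fun _ ⟨a, ha, he⟩ => ⟨a, h ha, he⟩)

lemma Ksub_map_le {G G' : Type*} [Group G] [Group G'] (f : G →* G') (n r : ℕ) :
    (Ksub G n r).map f ≤ Ksub G' n r := by
  induction r with
  | zero => exact le_top
  | succ r ih =>
    show (⁅Ksub G n r, Ksub G n r⁆ ⊔ (Ksub G n r).nthPowers n).map f ≤ _
    rw [Subgroup.map_sup, Subgroup.map_commutator, map_nthPowers]
    exact sup_le (le_trans (Subgroup.commutator_mono ih ih) le_sup_left)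
      (le_trans (nthPowers_mono ih n) le_sup_right)

lemma pow_mem_Ksub {G : Type*} [Group G] (n r : ℕ) (g : G) : g ^ (n ^ r) ∈ Ksub G n r := by
  induction r with
  | zero => exact Subgroup.mem_top _
  | succ r ih =>
    have : g ^ (n ^ (r + 1)) = (g ^ (n ^ r)) ^ n := by rw [← pow_mul, pow_succ]
    rw [this]
    refine SetLike.le_def.mp le_sup_right (Subgroup.subset_closure ?_)
    exact ⟨g ^ (n ^ r), ih, rfl⟩

lemma Ksub_le_range_pow {A : Type*} [CommGroup A] (n r : ℕ) :
    Ksub A n r ≤ (powMonoidHom (n ^ r) : A →* A).range := by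
  induction r with
  | zero => exact fun a _ => ⟨a, pow_one a⟩
  | succ r ih =>
    show ⁅Ksub A n r, Ksub A n r⁆ ⊔ (Ksub A n r).nthPowers n ≤ _
    apply sup_le
    · refine Subgroup.commutator_le.mpr fun g _ h _ => ?_
      rw [commutatorElement_eq_one_iff_mul_comm.mpr (mul_comm g h)]
      exact one_mem _
    · refine Subgroup.closure_le _ |>.mpr ?_
      rintro x ⟨h, hh, rfl⟩
      obtain ⟨b, hb⟩ := ih hh
      exact ⟨b, by rw [powMonoidHom_apply] at hb ⊢; rw [pow_succ, pow_mul, hb]⟩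

/-- The image of each free generator `f_i` in `Φ_{m,r,n} = F/K_{r,n}` has order
exactly `nʳ`. -/
theorem orderOf_generator_free_solvable_quotient (m r n : ℕ) (hm : 2 ≤ m) (hn : 1 ≤ n)
    (i : Fin m) :
    orderOf (QuotientGroup.mk (FreeGroup.of i) :
      FreeGroup (Fin m) ⧸ Ksub (FreeGroup (Fin m)) n r) = n ^ r := by
  set N := n ^ r with hN
  set φ : FreeGroup (Fin m) →* Multiplicative (ZMod N) :=
    FreeGroup.lift fun _ => Multiplicative.ofAdd (1 : ZMod N) with hφ
  have hker : ∀ x ∈ Ksub (FreeGroup (Fin m)) n r, φ x = 1 := by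
    intro x hx
    have h1 : φ x ∈ Ksub (Multiplicative (ZMod N)) n r :=
      Ksub_map_le φ n r ⟨x, hx, rfl⟩
    obtain ⟨b, hb⟩ := Ksub_le_range_pow n r h1
    rw [powMonoidHom_apply] at hb
    rw [← hb]
    have : Multiplicative.toAdd (b ^ N) = (0 : ZMod N) := by
      rw [show Multiplicative.toAdd (b ^ N) = N • Multiplicative.toAdd b from rfl,
        nsmul_eq_mul, ZMod.natCast_self, zero_mul]
    rw [← ofAdd_toAdd (b ^ N), this, ofAdd_zero]
  set x : FreeGroup (Fin m) ⧸ Ksub (FreeGroup (Fin m)) n r :=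
    QuotientGroup.mk (FreeGroup.of i) with hx
  have hxpow : x ^ N = 1 := by
    rw [hx, ← QuotientGroup.mk_pow, QuotientGroup.eq_one_iff]
    exact pow_mem_Ksub n r _
  have hdvd : ∀ k : ℕ, x ^ k = 1 → N ∣ k := by
    intro k hk
    rw [hx, ← QuotientGroup.mk_pow, QuotientGroup.eq_one_iff] at hk
    have := hker _ hk
    rw [map_pow, hφ, FreeGroup.lift_apply_of] at this
    have horder : orderOf (Multiplicative.ofAdd (1 : ZMod N)) = N := by
      rw [orderOf_ofAdd_eq_addOrderOf, ZMod.addOrderOf_one]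
    rw [← horder]
    exact orderOf_dvd_of_pow_eq_one this
  exact Nat.dvd_antisymm (orderOf_dvd_of_pow_eq_one hxpow) (hdvd _ (pow_orderOf_eq_one x))
end

section
/- Let p be a prime and let G = (ℤ/pℤ)² be the free abelian group on two generators x, y written multiplicatively. Then the element x + y − 1 is a unit (invertible element) of the group ring (ℤ/pℤ)[G]; indeed (x + y − 1)·Σ_{i=0}^{p−1}(x+y)^i = 1. -/
/-! By the Frobenius, `(x + y) ^ p = x ^ p + y ^ p = 2` in characteristic `p`, so `z = x + y`
satisfies `(z - 1) * ∑_{i<p} z ^ i = z ^ p - 1 = 1`. -/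

namespace MonoidAlgebra

instance charP (k G : Type*) [CommRing k] [Monoid G] (p : ℕ) [CharP k p] :
    CharP (MonoidAlgebra k G) p :=
  charP_of_injective_algebraMap' k p

theorem of_pow_eq_one {k G : Type*} [Semiring k] [Monoid G] {g : G} {n : ℕ} (h : g ^ n = 1) :
    of k G g ^ n = 1 := by
  rw [← map_pow, h, map_one]

end MonoidAlgebra

theorem ofAdd_pow_char {p : ℕ} {A : Type*} [AddCommGroup A] [Module (ZMod p) A] (a : A) :
    Multiplicative.ofAdd a ^ p = 1 := by
  rw [← ofAdd_nsmul, ZModModule.char_nsmul_eq_zero, ofAdd_zero]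

theorem add_pow_char_eq_two {R : Type*} [CommSemiring R] (p : ℕ) [Fact p.Prime] [CharP R p]
    {x y : R} (hx : x ^ p = 1) (hy : y ^ p = 1) : (x + y) ^ p = 2 := by
  rw [add_pow_char, hx, hy, one_add_one_eq_two]

theorem sub_one_mul_geom_sum_eq_one {R : Type*} [Ring R] {z : R} {n : ℕ} (h : z ^ n = 2) :
    (z - 1) * ∑ i ∈ Finset.range n, z ^ i = 1 := by
  rw [mul_geom_sum, h]
  norm_num

/-- For a prime `p` and `G = (ℤ/pℤ)²` (written multiplicatively, with generators `x, y`),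
the element `x + y − 1` of the group ring `(ℤ/pℤ)[G]` is a unit; indeed
`(x + y − 1) · Σ_{i<p} (x+y)ⁱ = 1`. -/
theorem x_add_y_sub_one_isUnit (p : ℕ) (hp : p.Prime) :
    IsUnit
      (MonoidAlgebra.of (ZMod p) (Multiplicative (ZMod p × ZMod p))
          (Multiplicative.ofAdd ((1 : ZMod p), (0 : ZMod p))) +
        MonoidAlgebra.of (ZMod p) (Multiplicative (ZMod p × ZMod p))
          (Multiplicative.ofAdd ((0 : ZMod p), (1 : ZMod p))) - 1) ∧
    (MonoidAlgebra.of (ZMod p) (Multiplicative (ZMod p × ZMod p))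
          (Multiplicative.ofAdd ((1 : ZMod p), (0 : ZMod p))) +
        MonoidAlgebra.of (ZMod p) (Multiplicative (ZMod p × ZMod p))
          (Multiplicative.ofAdd ((0 : ZMod p), (1 : ZMod p))) - 1) *
      ∑ i ∈ Finset.range p,
        (MonoidAlgebra.of (ZMod p) (Multiplicative (ZMod p × ZMod p))
            (Multiplicative.ofAdd ((1 : ZMod p), (0 : ZMod p))) +
          MonoidAlgebra.of (ZMod p) (Multiplicative (ZMod p × ZMod p))
            (Multiplicative.ofAdd ((0 : ZMod p), (1 : ZMod p)))) ^ i = 1 := by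
  have : Fact p.Prime := ⟨hp⟩
  have hxy := add_pow_char_eq_two p
    (MonoidAlgebra.of_pow_eq_one (k := ZMod p) (ofAdd_pow_char ((1 : ZMod p), (0 : ZMod p))))
    (MonoidAlgebra.of_pow_eq_one (k := ZMod p) (ofAdd_pow_char ((0 : ZMod p), (1 : ZMod p))))
  have key := sub_one_mul_geom_sum_eq_one hxy
  exact ⟨.of_mul_eq_one _ key, key⟩
end
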